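/- Let C be a category with pullbacks. For any n : ℕ, any objects X : Fin (n+1) → C and Y : Fin n → C, and any morphisms rᵢ : Y i ⟶ X i.castSucc and pᵢ : Y i ⟶ X i.succ for each i : Fin n (i.e. a zigzag X 0 ⟵ Y 0 ⟶ X 1 ⟵ Y 1 ⟶ ⋯ ⟶ X n), there exist an object Z and morphisms Z ⟶ X 0 and Z ⟶ X (Fin.last n). In particular, in a category of instances C ⥤ Type, any update (a finite zigzag of natural transformations between instances) can be obtained as a single regressive update followed by a single progressive update: there is an instance Z with morphisms Z ⟶ I₀ and Z ⟶ Iₙ. -/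
import Mathlib


open CategoryTheory CategoryTheory.Limits

universe v u w

lemma zigzag_span (C : Type u) [Category.{v} C] [HasPullbacks C] :
    ∀ (n : ℕ) (X : Fin (n + 1) → C) (Y : Fin n → C)
      (r : ∀ i : Fin n, Y i ⟶ X i.castSucc) (p : ∀ i : Fin n, Y i ⟶ X i.succ),
      ∃ Z : C, Nonempty (Z ⟶ X 0) ∧ Nonempty (Z ⟶ X (Fin.last n)) := by
  intro n
  induction n with
  | zero =>
    intro X Y r p
    exact ⟨X 0, ⟨𝟙 _⟩, ⟨𝟙 _⟩⟩
  | succ n ih =>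
    intro X Y r p
    obtain ⟨Z, ⟨f⟩, ⟨g⟩⟩ := ih (fun i => X i.castSucc) (fun i => Y i.castSucc)
      (fun i => r i.castSucc) (fun i => p i.castSucc)
    refine ⟨pullback g (r (Fin.last n)), ⟨pullback.fst g (r (Fin.last n)) ≫ f⟩,
      ⟨pullback.snd g (r (Fin.last n)) ≫ p (Fin.last n)⟩⟩

/-- In a category with pullbacks, any finite zigzag
`X 0 ⟵ Y 0 ⟶ X 1 ⟵ Y 1 ⟶ ⋯ ⟶ X n` can be spanned by a single object: there is an
object `Z` with morphisms `Z ⟶ X 0` and `Z ⟶ X n`.  In particular, in a category of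
instances `C ⥤ Type`, any update (a finite zigzag of natural transformations between
instances) can be obtained as a single regressive update followed by a single
progressive update. -/
theorem update_normal_form :
    (∀ (C : Type u) (_ : Category.{v} C), HasPullbacks C →
      ∀ (n : ℕ) (X : Fin (n + 1) → C) (Y : Fin n → C)
        (r : ∀ i : Fin n, Y i ⟶ X i.castSucc) (p : ∀ i : Fin n, Y i ⟶ X i.succ),
        ∃ Z : C, Nonempty (Z ⟶ X 0) ∧ Nonempty (Z ⟶ X (Fin.last n))) ∧
    (∀ (A : Type w) (_ : SmallCategory A)
      (n : ℕ) (I : Fin (n + 1) → (A ⥤ Type w)) (Y : Fin n → (A ⥤ Type w))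
      (r : ∀ i : Fin n, Y i ⟶ I i.castSucc) (p : ∀ i : Fin n, Y i ⟶ I i.succ),
      ∃ Z : A ⥤ Type w, Nonempty (Z ⟶ I 0) ∧ Nonempty (Z ⟶ I (Fin.last n))) := by
  constructor
  · intro C _ _ n X Y r p
    exact zigzag_span C n X Y r p
  · intro A _ n I Y r p
    exact zigzag_span (A ⥤ Type w) n I Y r p
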